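/- Let f : ℝⁿ → ℝⁿ be a C¹ map such that the Jacobian matrix Df(θ) satisfies det Df(θ) ≥ δ > 0 for all θ and ‖Df(θ) − Df(θ')‖ is uniformly controlled so that Df(θ)⁻¹ is uniformly bounded, and suppose f is a proper map. Then f is a global C¹ diffeomorphism of ℝⁿ onto ℝⁿ. -/

import Mathlib

/-!
Since the derivative is everywhere invertible, `f` is a local homeomorphism by the inverse
function theorem. Properness makes its fibres compact and discrete, hence finite, and makes `f`
closed, so `f` is a covering map. A covering of the simply connected space `ℝⁿ` by the connected
space `ℝⁿ` is a homeomorphism: lifting the identity gives a section `s`, and `s ∘ f` agrees with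
`id` by uniqueness of lifts. The inverse homeomorphism is `C¹` by the local inverse function
theorem.
-/

open Function

theorem ContinuousLinearMap.isInvertible_of_det_ne_zero {𝕜 E : Type*} [NontriviallyNormedField 𝕜]
    [CompleteSpace 𝕜] [NormedAddCommGroup E] [NormedSpace 𝕜 E] [FiniteDimensional 𝕜 E]
    (A : E →L[𝕜] E) (h : LinearMap.det (A : E →ₗ[𝕜] E) ≠ 0) : A.IsInvertible :=
  ⟨(LinearMap.equivOfDetNeZero _ h).toContinuousLinearEquiv, by ext; rfl⟩

theorem ContDiff.isLocalHomeomorph {𝕂 E F : Type*} [RCLike 𝕂] [NormedAddCommGroup E]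
    [NormedSpace 𝕂 E] [CompleteSpace E] [NormedAddCommGroup F] [NormedSpace 𝕂 F]
    {n : WithTop ℕ∞} {f : E → F} {f' : E → E ≃L[𝕂] F} (hf : ContDiff 𝕂 n f) (hn : n ≠ 0)
    (hf' : ∀ x, HasFDerivAt f (f' x : E →L[𝕂] F) x) : IsLocalHomeomorph f := fun x ↦
  ⟨hf.contDiffAt.toOpenPartialHomeomorph f (hf' x) hn,
    hf.contDiffAt.mem_toOpenPartialHomeomorph_source (hf' x) hn, rfl⟩

section

variable {E X : Type*} [TopologicalSpace E] [TopologicalSpace X] {p : E → X}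

theorem IsProperMap.isCoveringMap [T2Space E] (hp : IsProperMap p) (hl : IsLocalHomeomorph p) :
    IsCoveringMap p := by
  rw [isCoveringMap_iff_isCoveringMapOn_univ]
  refine hp.isClosedMap.isCoveringMapOn_of_isLocalHomeomorphOn (fun x _ ↦ ?_)
    (by simpa [← isLocalHomeomorph_iff_isLocalHomeomorphOn_univ])
  exact (hp.isCompact_preimage isCompact_singleton).finite
    (.of_openPartialHomeomorph p subset_rfl fun e _ ↦ (hl e).imp fun _ ⟨he, hφ⟩ ↦ ⟨he, hφ.symm⟩)

theorem IsCoveringMap.bijective_of_simplyConnectedSpace [ConnectedSpace E]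
    [SimplyConnectedSpace X] [LocallyPathConnectedSpace X] (hp : IsCoveringMap p) :
    Bijective p := by
  obtain ⟨e₀⟩ := ‹ConnectedSpace E›.toNonempty
  obtain ⟨s, ⟨hs₀, hps⟩, -⟩ :=
    hp.existsUnique_continuousMap_lifts (ContinuousMap.id X) (p e₀) e₀ rfl
  have hsp : s ∘ p = id :=
    hp.eq_of_comp_eq (s.continuous.comp hp.continuous) continuous_id
      (by rw [← Function.comp_assoc, hps]; rfl) e₀ hs₀
  exact ⟨LeftInverse.injective (congrFun hsp), RightInverse.surjective (congrFun hps)⟩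

end

theorem IsProperMap.exists_contDiff_inverse {E F : Type*} [NormedAddCommGroup E]
    [NormedSpace ℝ E] [CompleteSpace E] [NormedAddCommGroup F] [NormedSpace ℝ F]
    {n : WithTop ℕ∞} {f : E → F} {f' : E → E ≃L[ℝ] F} (hp : IsProperMap f)
    (hf : ContDiff ℝ n f) (hn : n ≠ 0) (hf' : ∀ x, HasFDerivAt f (f' x : E →L[ℝ] F) x) :
    ∃ g : F → E, LeftInverse g f ∧ RightInverse g f ∧ ContDiff ℝ n g := by
  have hl := hf.isLocalHomeomorph hn hf'
  let h := hl.toHomeomorphOfBijective (hp.isCoveringMap hl).bijective_of_simplyConnectedSpace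
  exact ⟨h.symm, h.symm_apply_apply, h.apply_symm_apply, h.contDiff_symm hf' hf⟩

theorem stmt8_general {n : ℕ}
    (f : EuclideanSpace ℝ (Fin n) → EuclideanSpace ℝ (Fin n))
    (hf : ContDiff ℝ 1 f)
    (δ : ℝ) (hδ : 0 < δ)
    (hdet : ∀ θ, δ ≤ LinearMap.det ((fderiv ℝ f θ) :
      EuclideanSpace ℝ (Fin n) →ₗ[ℝ] EuclideanSpace ℝ (Fin n)))
    (hproper : IsProperMap f) :
    ∃ g : EuclideanSpace ℝ (Fin n) → EuclideanSpace ℝ (Fin n),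
      Function.LeftInverse g f ∧ Function.RightInverse g f ∧ ContDiff ℝ 1 g := by
  choose f' hf' using fun θ ↦
    (fderiv ℝ f θ).isInvertible_of_det_ne_zero (hδ.trans_le (hdet θ)).ne'
  refine hproper.exists_contDiff_inverse (f' := f') hf one_ne_zero fun θ ↦ ?_
  rw [hf' θ]
  exact (hf.differentiable one_ne_zero θ).hasFDerivAt

theorem stmt8 {n : ℕ}
    (f : EuclideanSpace ℝ (Fin n) → EuclideanSpace ℝ (Fin n))
    (hf : ContDiff ℝ 1 f)
    (δ : ℝ) (hδ : 0 < δ)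
    (hdet : ∀ θ, δ ≤ LinearMap.det ((fderiv ℝ f θ) :
      EuclideanSpace ℝ (Fin n) →ₗ[ℝ] EuclideanSpace ℝ (Fin n)))
    (M : ℝ) (hinv : ∀ θ, ‖(fderiv ℝ f θ).inverse‖ ≤ M)
    (hproper : IsProperMap f) :
    ∃ g : EuclideanSpace ℝ (Fin n) → EuclideanSpace ℝ (Fin n),
      Function.LeftInverse g f ∧ Function.RightInverse g f ∧ ContDiff ℝ 1 g :=
  stmt8_general f hf δ hδ hdet hproper
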